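/- Let G be a finite group and m > 1. If g, h ∈ G^m \ {e} are adjacent in the Cayley graph Cay(G^m, S) (i.e. h = s·g for some s ∈ S), then |ϑ(g) − ϑ(h)| ≤ 2, where ϑ denotes the weight (number of blocks in the canonical interval decomposition). -/

import Mathlib

namespace CayleyStmt2

variable {G : Type*}

def intvl [Group G] (m : ℕ) (x : G) (k l : ℕ) : Fin m → G :=
  fun i => if k ≤ i.1 + 1 ∧ i.1 + 1 < l then x else 1

def cS (G : Type*) [Group G] (m : ℕ) : Set (Fin m → G) :=
  {v | ∃ (x : G) (k l : ℕ), x ≠ 1 ∧ 1 ≤ k ∧ k < l ∧ l ≤ m + 1 ∧ v = intvl m x k l}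

/-- Adjacency in the Cayley graph `Cay(G^m, S)`. -/
def cAdj [Group G] (m : ℕ) (g h : Fin m → G) : Prop := h * g⁻¹ ∈ cS G m

/-- The canonical weight decomposition of a nonidentity element of `G^m`. -/
def GoodDecomp [Group G] (m : ℕ) (g : Fin m → G)
    (d : Σ k : ℕ, (Fin (k + 1) → ℕ) × (Fin k → G)) : Prop :=
  0 < d.1 ∧
  StrictMono d.2.1 ∧
  1 ≤ d.2.1 0 ∧
  d.2.1 (Fin.last d.1) ≤ m + 1 ∧
  (∀ h : 0 < d.1, d.2.2 ⟨0, h⟩ ≠ 1) ∧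
  (∀ h : 0 < d.1, d.2.2 ⟨d.1 - 1, by omega⟩ ≠ 1) ∧
  (∀ j : ℕ, ∀ h : j + 1 < d.1, d.2.2 ⟨j, by omega⟩ ≠ d.2.2 ⟨j + 1, h⟩) ∧
  g = (List.ofFn fun j : Fin d.1 =>
        intvl m (d.2.2 j) (d.2.1 j.castSucc) (d.2.1 j.succ)).prod

/-!
Read `g : G^m` as the word `1, g 0, …, g (m-1), 1` and call a position where two consecutive
letters differ a breakpoint. The blocks of the weight decomposition of `g` are exactly the
maximal constant nontrivial runs of this word, so `g` has `ϑ g + 1` breakpoints. Breakpoints of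
a product lie among the breakpoints of the factors, and a generator `x_{[k,l)}` has at most the
two breakpoints `k` and `l`. So `h = s g` has at most two more breakpoints than `g`, and since
`g = s⁻¹ h` and inversion preserves breakpoints, the converse holds as well.
-/

section Breakpoints

variable {M : Type*} {m : ℕ}

/-- `pad g p` is the `p`-th letter of the word `1, g 0, …, g (m-1), 1`. -/
def pad [One M] (g : Fin m → M) (p : ℕ) : M :=
  if h : 1 ≤ p ∧ p ≤ m then g ⟨p - 1, by omega⟩ else 1

open Classical in
noncomputable def breakpoints [One M] (g : Fin m → M) : Finset ℕ :=
  (Finset.Icc 1 (m + 1)).filter fun p => pad g (p - 1) ≠ pad g p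

lemma mem_breakpoints [One M] {g : Fin m → M} {p : ℕ} :
    p ∈ breakpoints g ↔ (1 ≤ p ∧ p ≤ m + 1) ∧ pad g (p - 1) ≠ pad g p := by
  simp only [breakpoints, Finset.mem_filter, Finset.mem_Icc]

@[simp]
lemma pad_one [One M] (p : ℕ) : pad (1 : Fin m → M) p = 1 := by
  unfold pad; split_ifs <;> rfl

lemma pad_mul [MulOneClass M] (g h : Fin m → M) (p : ℕ) :
    pad (g * h) p = pad g p * pad h p := by
  unfold pad; split_ifs <;> simp

lemma pad_inv [InvOneClass M] (g : Fin m → M) (p : ℕ) : pad g⁻¹ p = (pad g p)⁻¹ := by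
  unfold pad; split_ifs <;> simp

lemma pad_list_prod [Monoid M] (L : List (Fin m → M)) (p : ℕ) :
    pad L.prod p = (L.map (pad · p)).prod := by
  induction L with
  | nil => exact pad_one p
  | cons g L ih => rw [List.prod_cons, pad_mul, ih, List.map_cons, List.prod_cons]

lemma breakpoints_mul_subset [MulOneClass M] (g h : Fin m → M) :
    breakpoints (g * h) ⊆ breakpoints g ∪ breakpoints h := by
  intro p hp
  rw [mem_breakpoints, pad_mul, pad_mul] at hp
  rw [Finset.mem_union, mem_breakpoints, mem_breakpoints]
  by_contra! hcon
  exact hp.2 (by rw [hcon.1 hp.1, hcon.2 hp.1])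

lemma card_breakpoints_mul_le [MulOneClass M] (g h : Fin m → M) :
    (breakpoints (g * h)).card ≤ (breakpoints g).card + (breakpoints h).card :=
  (Finset.card_le_card (breakpoints_mul_subset g h)).trans (Finset.card_union_le _ _)

lemma exists_mem_breakpoints_of_mem_list_prod [Monoid M] {L : List (Fin m → M)} {p : ℕ}
    (hp : p ∈ breakpoints L.prod) : ∃ g ∈ L, p ∈ breakpoints g := by
  induction L with
  | nil => simp [mem_breakpoints] at hp
  | cons g L ih =>
    rw [List.prod_cons] at hp
    rcases Finset.mem_union.1 (breakpoints_mul_subset g L.prod hp) with hg | hL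
    · exact ⟨g, List.mem_cons_self, hg⟩
    · obtain ⟨g', hg', hp'⟩ := ih hL
      exact ⟨g', List.mem_cons_of_mem g hg', hp'⟩

@[simp]
lemma breakpoints_inv [DivisionMonoid M] (g : Fin m → M) :
    breakpoints g⁻¹ = breakpoints g := by
  ext p
  simp only [mem_breakpoints, pad_inv, ne_eq, inv_inj]

end Breakpoints

lemma list_prod_ofFn_eq_single {M : Type*} [Monoid M] {k : ℕ} (F : Fin k → M) (j : Fin k)
    (hF : ∀ i, i ≠ j → F i = 1) : (List.ofFn F).prod = F j := by
  rw [List.ofFn_eq_map, List.prod_map_eq_pow_single j F fun i hi _ => hF i hi,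
    List.count_finRange, pow_one]

section Intervals

variable [Group G] {m a b : ℕ} {x : G}

lemma pad_intvl (ha : 1 ≤ a) (hb : b ≤ m + 1) (p : ℕ) :
    pad (intvl m x a b) p = if a ≤ p ∧ p < b then x else 1 := by
  unfold pad intvl
  dsimp only
  split_ifs <;> first | rfl | omega

lemma breakpoints_intvl_subset (ha : 1 ≤ a) (hb : b ≤ m + 1) :
    breakpoints (intvl m x a b) ⊆ {a, b} := by
  intro p hp
  rw [mem_breakpoints, pad_intvl ha hb, pad_intvl ha hb] at hp
  rw [Finset.mem_insert, Finset.mem_singleton]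
  by_contra! hpab
  apply hp.2
  split_ifs <;> first | rfl | omega

lemma card_breakpoints_intvl_le (ha : 1 ≤ a) (hb : b ≤ m + 1) :
    (breakpoints (intvl m x a b)).card ≤ 2 :=
  (Finset.card_le_card (breakpoints_intvl_subset ha hb)).trans Finset.card_le_two

end Intervals

namespace GoodDecomp

variable [Group G] {m k : ℕ} {g : Fin m → G} {f : Fin (k + 1) → ℕ} {x : Fin k → G}

lemma strictMono (hd : GoodDecomp m g ⟨k, f, x⟩) : StrictMono f := hd.2.1

lemma one_le_apply (hd : GoodDecomp m g ⟨k, f, x⟩) (i : Fin (k + 1)) : 1 ≤ f i :=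
  hd.2.2.1.trans (hd.strictMono.monotone (Fin.zero_le i))

lemma apply_le (hd : GoodDecomp m g ⟨k, f, x⟩) (i : Fin (k + 1)) : f i ≤ m + 1 :=
  (hd.strictMono.monotone (Fin.le_last i)).trans hd.2.2.2.1

lemma eq_prod (hd : GoodDecomp m g ⟨k, f, x⟩) :
    g = (List.ofFn fun j : Fin k => intvl m (x j) (f j.castSucc) (f j.succ)).prod :=
  hd.2.2.2.2.2.2.2

lemma pad_eq (hd : GoodDecomp m g ⟨k, f, x⟩) (p : ℕ) :
    pad g p = (List.ofFn fun j : Fin k =>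
      if f j.castSucc ≤ p ∧ p < f j.succ then x j else 1).prod := by
  have hfactor (j : Fin k) := pad_intvl (x := x j) (hd.one_le_apply j.castSucc)
    (hd.apply_le j.succ) p
  rw [hd.eq_prod, pad_list_prod, List.map_ofFn]
  exact congrArg List.prod (List.ofFn_inj.2 (funext hfactor))

lemma pad_eq_of_mem_block (hd : GoodDecomp m g ⟨k, f, x⟩) {j : Fin k} {p : ℕ}
    (hp : f j.castSucc ≤ p ∧ p < f j.succ) : pad g p = x j := by
  rw [hd.pad_eq, list_prod_ofFn_eq_single _ j, if_pos hp]
  intro i hij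
  rw [if_neg]
  rcases lt_or_gt_of_ne hij with hlt | hgt
  · have := hd.strictMono.monotone (Fin.succ_le_castSucc_iff.2 hlt)
    omega
  · have := hd.strictMono.monotone (Fin.succ_le_castSucc_iff.2 hgt)
    omega

lemma pad_eq_one (hd : GoodDecomp m g ⟨k, f, x⟩) {p : ℕ}
    (hp : p < f 0 ∨ f (Fin.last k) ≤ p) : pad g p = 1 := by
  rw [hd.pad_eq]
  refine List.prod_eq_one fun y hy => ?_
  obtain ⟨j, rfl⟩ := List.mem_ofFn.1 hy
  have h0 := hd.strictMono.monotone (Fin.zero_le j.castSucc)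
  have hlast := hd.strictMono.monotone (Fin.le_last j.succ)
  exact if_neg (by omega)

lemma pad_pred_apply (hd : GoodDecomp m g ⟨k, f, x⟩) (i : Fin (k + 1)) :
    pad g (f i - 1) = if h : (i : ℕ) = 0 then 1 else x ⟨i - 1, by omega⟩ := by
  split_ifs with hi
  · rw [show i = 0 from Fin.ext hi]
    exact hd.pad_eq_one (Or.inl (by have := hd.one_le_apply 0; omega))
  · have hsucc : (⟨i - 1, by omega⟩ : Fin k).succ = i :=
      Fin.ext (by simp only [Fin.val_succ]; omega)
    have hlt := hd.strictMono (show (⟨i - 1, by omega⟩ : Fin k).castSucc < i from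
      Fin.lt_def.2 (by simp only [Fin.val_castSucc]; omega))
    exact hd.pad_eq_of_mem_block (by rw [hsucc]; omega)

lemma pad_apply (hd : GoodDecomp m g ⟨k, f, x⟩) (i : Fin (k + 1)) :
    pad g (f i) = if h : (i : ℕ) < k then x ⟨i, h⟩ else 1 := by
  split_ifs with hi
  · have hcast : (⟨i, hi⟩ : Fin k).castSucc = i := rfl
    have hlt := hd.strictMono (show i < (⟨i, hi⟩ : Fin k).succ from Fin.lt_def.2 (by simp))
    exact hd.pad_eq_of_mem_block (by rw [hcast]; omega)
  · have : i = Fin.last k := Fin.ext (by simp only [Fin.val_last]; omega)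
    exact hd.pad_eq_one (Or.inr (by rw [this]))

lemma pad_pred_ne (hd : GoodDecomp m g ⟨k, f, x⟩) (i : Fin (k + 1)) :
    pad g (f i - 1) ≠ pad g (f i) := by
  obtain ⟨hk, -, -, -, hx0, hxlast, hcons, -⟩ := id hd
  dsimp only at hk hx0 hxlast hcons
  rw [hd.pad_pred_apply, hd.pad_apply]
  split_ifs with h0 hlt hlt
  · have : (⟨i, hlt⟩ : Fin k) = ⟨0, hk⟩ := Fin.ext h0
    exact this ▸ (hx0 hk).symm
  · omega
  · have := hcons (i - 1) (by omega)
    rwa [show (⟨i - 1 + 1, _⟩ : Fin k) = ⟨i, hlt⟩ from Fin.mk.inj_iff.2 (by omega)] at this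
  · have : (⟨i - 1, by omega⟩ : Fin k) = ⟨k - 1, by omega⟩ := Fin.mk.inj_iff.2 (by omega)
    exact this ▸ hxlast hk

lemma breakpoints_eq (hd : GoodDecomp m g ⟨k, f, x⟩) : breakpoints g = Finset.univ.image f := by
  ext p
  rw [Finset.mem_image]
  constructor
  · intro hp
    rw [hd.eq_prod] at hp
    obtain ⟨_, hmem, hp⟩ := exists_mem_breakpoints_of_mem_list_prod hp
    obtain ⟨j, rfl⟩ := List.mem_ofFn.1 hmem
    have := breakpoints_intvl_subset (hd.one_le_apply j.castSucc) (hd.apply_le j.succ) hp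
    rcases Finset.mem_insert.1 this with rfl | hp
    · exact ⟨_, Finset.mem_univ _, rfl⟩
    · exact ⟨_, Finset.mem_univ _, (Finset.mem_singleton.1 hp).symm⟩
  · rintro ⟨i, -, rfl⟩
    exact mem_breakpoints.2 ⟨⟨hd.one_le_apply i, hd.apply_le i⟩, hd.pad_pred_ne i⟩

lemma card_breakpoints {d : Σ k : ℕ, (Fin (k + 1) → ℕ) × (Fin k → G)} (hd : GoodDecomp m g d) :
    (breakpoints g).card = d.1 + 1 := by
  obtain ⟨k, f, x⟩ := d
  rw [hd.breakpoints_eq, Finset.card_image_of_injective _ hd.strictMono.injective,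
    Finset.card_univ, Fintype.card_fin]

end GoodDecomp

theorem weight_diff_le_two [Group G] (m : ℕ)
    (g h : Fin m → G)
    (dg dh : Σ k : ℕ, (Fin (k + 1) → ℕ) × (Fin k → G))
    (hdg : GoodDecomp m g dg) (hdh : GoodDecomp m h dh)
    (hadj : cAdj m g h) :
    |(dg.1 : ℤ) - (dh.1 : ℤ)| ≤ 2 := by
  obtain ⟨x, a, b, -, ha, -, hb, hs⟩ := hadj
  have hh : h = intvl m x a b * g := by rw [← hs, inv_mul_cancel_right]
  have hg : g = (intvl m x a b)⁻¹ * h := by rw [hh, inv_mul_cancel_left]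
  have hle₁ := card_breakpoints_mul_le (intvl m x a b) g
  have hle₂ := card_breakpoints_mul_le (intvl m x a b)⁻¹ h
  rw [← hh] at hle₁
  rw [← hg, breakpoints_inv] at hle₂
  have hs₂ := card_breakpoints_intvl_le (x := x) ha hb
  rw [hdg.card_breakpoints, hdh.card_breakpoints] at *
  rw [abs_le]
  omega

end CayleyStmt2
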